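/- With F₈ = −σ₂/6, F₁₂ = −σ₃/4, F₂₀ = σ₅/12 and Π₂₀ = Q₁Q₂⋯Q₁₀, the polynomial identity F₂₀ = F₈·F₁₂ + 81·Π₂₀ holds in ℂ[x₁,x₂,x₃,x₄]; equivalently, 2σ₅ = σ₂σ₃ + 1944·Q₁Q₂⋯Q₁₀. -/
import Mathlib


open Complex Matrix MvPolynomial
/-- The ten quadrics Q₁, …, Q₁₀ (variables x₁,…,x₄ are `X 0, …, X 3`). -/
noncomputable def Q : Fin 10 → MvPolynomial (Fin 4) ℂ :=
  ![X 0 * X 2 + C I * X 0 * X 3 - X 1 * X 3 - C I * X 1 * X 2,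
    X 0 * X 2 + C I * X 1 * X 2 - X 1 * X 3 - C I * X 0 * X 3,
    X 0 ^ 2 + C I * X 2 ^ 2 - X 1 ^ 2 - C I * X 3 ^ 2,
    X 0 ^ 2 + C I * X 3 ^ 2 - X 1 ^ 2 - C I * X 2 ^ 2,
    X 0 * X 2 - C I * X 0 * X 3 - C I * X 1 * X 2 + X 1 * X 3,
    X 0 * X 2 + C I * X 0 * X 3 + C I * X 1 * X 2 + X 1 * X 3,
    X 0 ^ 2 + X 1 ^ 2 + 2 * X 2 * X 3,
    2 * X 0 * X 1 + X 2 ^ 2 + X 3 ^ 2,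
    X 0 ^ 2 + X 1 ^ 2 - 2 * X 2 * X 3,
    2 * X 0 * X 1 - X 2 ^ 2 - X 3 ^ 2]


/-- The six quartics A₁, …, A₆ (variables x₁,…,x₄ are `X 0, …, X 3`). -/
noncomputable def A : Fin 6 → MvPolynomial (Fin 4) ℂ :=
  ![2 * X 0 ^ 4 + 2 * X 1 ^ 4 - X 2 ^ 4 - X 3 ^ 4
      + 12 * X 0 * X 1 * (X 2 ^ 2 + X 3 ^ 2) + 6 * X 2 ^ 2 * X 3 ^ 2,
    -X 0 ^ 4 - X 1 ^ 4 + 2 * X 2 ^ 4 + 2 * X 3 ^ 4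
      + 6 * X 0 ^ 2 * X 1 ^ 2 - 12 * (X 0 ^ 2 + X 1 ^ 2) * X 2 * X 3,
    2 * X 0 ^ 4 + 2 * X 1 ^ 4 - X 2 ^ 4 - X 3 ^ 4
      - 12 * X 0 * X 1 * (X 2 ^ 2 + X 3 ^ 2) + 6 * X 2 ^ 2 * X 3 ^ 2,
    -X 0 ^ 4 - X 1 ^ 4 + 2 * X 2 ^ 4 + 2 * X 3 ^ 4
      + 6 * X 0 ^ 2 * X 1 ^ 2 + 12 * (X 0 ^ 2 + X 1 ^ 2) * X 2 * X 3,
    -X 0 ^ 4 - X 1 ^ 4 - X 2 ^ 4 - X 3 ^ 4 - 6 * X 0 ^ 2 * X 1 ^ 2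
      + C (6 * I) * (X 0 ^ 2 - X 1 ^ 2) * (X 2 ^ 2 - X 3 ^ 2) - 6 * X 2 ^ 2 * X 3 ^ 2,
    -X 0 ^ 4 - X 1 ^ 4 - X 2 ^ 4 - X 3 ^ 4 - 6 * X 0 ^ 2 * X 1 ^ 2
      - C (6 * I) * (X 0 ^ 2 - X 1 ^ 2) * (X 2 ^ 2 - X 3 ^ 2) - 6 * X 2 ^ 2 * X 3 ^ 2]

/-- The k-th elementary symmetric polynomial of A₁, …, A₆. -/
noncomputable def σ (k : ℕ) : MvPolynomial (Fin 4) ℂ :=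
  ∑ t ∈ Finset.powersetCard k (Finset.univ : Finset (Fin 6)), ∏ j ∈ t, A j


lemma hI : (C I : MvPolynomial (Fin 4) ℂ) * C I = -1 := by
  rw [← C_mul, Complex.I_mul_I]; simp

lemma hI6 : (C (6*I) : MvPolynomial (Fin 4) ℂ) * C (6*I) = -36 := by
  rw [← C_mul]
  have : (6*I) * (6*I) = (-36 : ℂ) := by
    have := Complex.I_mul_I; ring_nf; rw [Complex.I_sq]; ring
  rw [this, map_neg, map_ofNat]

lemma hq01 : Q 0 * Q 1 = (X 0 * X 2 - X 1 * X 3)^2 + (X 0 * X 3 - X 1 * X 2)^2 := by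
  simp only [Q, Matrix.cons_val_zero, Matrix.cons_val_one, Matrix.head_cons]
  linear_combination (-((X 0 * X 3 - X 1 * X 2 : MvPolynomial (Fin 4) ℂ)^2)) * hI

lemma hq23 : Q 2 * Q 3 = (X 0 ^ 2 - X 1 ^ 2)^2 + (X 2 ^ 2 - X 3 ^ 2)^2 := by
  show (X 0 ^ 2 + C I * X 2 ^ 2 - X 1 ^ 2 - C I * X 3 ^ 2) *
    (X 0 ^ 2 + C I * X 3 ^ 2 - X 1 ^ 2 - C I * X 2 ^ 2) = _
  linear_combination (-((X 2 ^ 2 - X 3 ^ 2 : MvPolynomial (Fin 4) ℂ)^2)) * hI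

lemma hq45 : Q 4 * Q 5 = (X 0 * X 2 + X 1 * X 3)^2 + (X 0 * X 3 + X 1 * X 2)^2 := by
  show (X 0 * X 2 - C I * X 0 * X 3 - C I * X 1 * X 2 + X 1 * X 3) *
    (X 0 * X 2 + C I * X 0 * X 3 + C I * X 1 * X 2 + X 1 * X 3) = _
  linear_combination (-((X 0 * X 3 + X 1 * X 2 : MvPolynomial (Fin 4) ℂ)^2)) * hI

lemma hs45 : A 4 + A 5 = -(2*(X 0^4 + X 1^4 + X 2^4 + X 3^4)) - 12*X 0^2*X 1^2 - 12*X 2^2*X 3^2 := by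
  show (-X 0 ^ 4 - X 1 ^ 4 - X 2 ^ 4 - X 3 ^ 4 - 6 * X 0 ^ 2 * X 1 ^ 2
      + C (6 * I) * (X 0 ^ 2 - X 1 ^ 2) * (X 2 ^ 2 - X 3 ^ 2) - 6 * X 2 ^ 2 * X 3 ^ 2) +
    (-X 0 ^ 4 - X 1 ^ 4 - X 2 ^ 4 - X 3 ^ 4 - 6 * X 0 ^ 2 * X 1 ^ 2
      - C (6 * I) * (X 0 ^ 2 - X 1 ^ 2) * (X 2 ^ 2 - X 3 ^ 2) - 6 * X 2 ^ 2 * X 3 ^ 2) = _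
  ring

lemma hp45 : A 4 * A 5 = (X 0^4 + X 1^4 + X 2^4 + X 3^4 + 6*X 0^2*X 1^2 + 6*X 2^2*X 3^2)^2
    + 36*((X 0^2 - X 1^2)*(X 2^2 - X 3^2))^2 := by
  show (-X 0 ^ 4 - X 1 ^ 4 - X 2 ^ 4 - X 3 ^ 4 - 6 * X 0 ^ 2 * X 1 ^ 2
      + C (6 * I) * (X 0 ^ 2 - X 1 ^ 2) * (X 2 ^ 2 - X 3 ^ 2) - 6 * X 2 ^ 2 * X 3 ^ 2) *
    (-X 0 ^ 4 - X 1 ^ 4 - X 2 ^ 4 - X 3 ^ 4 - 6 * X 0 ^ 2 * X 1 ^ 2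
      - C (6 * I) * (X 0 ^ 2 - X 1 ^ 2) * (X 2 ^ 2 - X 3 ^ 2) - 6 * X 2 ^ 2 * X 3 ^ 2) = _
  linear_combination (-(((X 0^2 - X 1^2)*(X 2^2 - X 3^2) : MvPolynomial (Fin 4) ℂ)^2)) * hI6

lemma sig2 : σ 2 = (A 0*A 1 + A 0*A 2 + A 0*A 3 + A 1*A 2 + A 1*A 3 + A 2*A 3) + (A 0+A 1+A 2+A 3)*(A 4+A 5) + A 4*A 5 := by
  rw [σ, show Finset.powersetCard 2 (Finset.univ : Finset (Fin 6)) = {{0,1},{0,2},{0,3},{0,4},{0,5},{1,2},{1,3},{1,4},{1,5},{2,3},{2,4},{2,5},{3,4},{3,5},{4,5}} from by decide]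
  rw [Finset.sum_insert (by decide), Finset.sum_insert (by decide), Finset.sum_insert (by decide), Finset.sum_insert (by decide), Finset.sum_insert (by decide), Finset.sum_insert (by decide), Finset.sum_insert (by decide), Finset.sum_insert (by decide), Finset.sum_insert (by decide), Finset.sum_insert (by decide), Finset.sum_insert (by decide), Finset.sum_insert (by decide), Finset.sum_insert (by decide), Finset.sum_insert (by decide), Finset.sum_singleton]
  repeat rw [Finset.prod_insert (by decide)]
  repeat rw [Finset.prod_singleton]
  ring

lemma sig3 : σ 3 = (A 0*A 1*A 2 + A 0*A 1*A 3 + A 0*A 2*A 3 + A 1*A 2*A 3) + (A 0*A 1 + A 0*A 2 + A 0*A 3 + A 1*A 2 + A 1*A 3 + A 2*A 3)*(A 4+A 5) + (A 0+A 1+A 2+A 3)*(A 4*A 5) := by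
  rw [σ, show Finset.powersetCard 3 (Finset.univ : Finset (Fin 6)) = {{0,1,2},{0,1,3},{0,1,4},{0,1,5},{0,2,3},{0,2,4},{0,2,5},{0,3,4},{0,3,5},{0,4,5},{1,2,3},{1,2,4},{1,2,5},{1,3,4},{1,3,5},{1,4,5},{2,3,4},{2,3,5},{2,4,5},{3,4,5}} from by decide]
  rw [Finset.sum_insert (by decide), Finset.sum_insert (by decide), Finset.sum_insert (by decide), Finset.sum_insert (by decide), Finset.sum_insert (by decide), Finset.sum_insert (by decide), Finset.sum_insert (by decide), Finset.sum_insert (by decide), Finset.sum_insert (by decide), Finset.sum_insert (by decide), Finset.sum_insert (by decide), Finset.sum_insert (by decide), Finset.sum_insert (by decide), Finset.sum_insert (by decide), Finset.sum_insert (by decide), Finset.sum_insert (by decide), Finset.sum_insert (by decide), Finset.sum_insert (by decide), Finset.sum_insert (by decide), Finset.sum_singleton]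
  repeat rw [Finset.prod_insert (by decide)]
  repeat rw [Finset.prod_singleton]
  ring

lemma sig5 : σ 5 = (A 0*A 1*A 2*A 3)*(A 4+A 5) + (A 0*A 1*A 2 + A 0*A 1*A 3 + A 0*A 2*A 3 + A 1*A 2*A 3)*(A 4*A 5) := by
  rw [σ, show Finset.powersetCard 5 (Finset.univ : Finset (Fin 6)) = {{0,1,2,3,4},{0,1,2,3,5},{0,1,2,4,5},{0,1,3,4,5},{0,2,3,4,5},{1,2,3,4,5}} from by decide]
  rw [Finset.sum_insert (by decide), Finset.sum_insert (by decide), Finset.sum_insert (by decide), Finset.sum_insert (by decide), Finset.sum_insert (by decide), Finset.sum_singleton]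
  repeat rw [Finset.prod_insert (by decide)]
  repeat rw [Finset.prod_singleton]
  ring


lemma prodQ : ∏ j, Q j = (Q 0 * Q 1) * ((Q 2 * Q 3) * ((Q 4 * Q 5) * (Q 6 * (Q 7 * (Q 8 * Q 9))))) := by
  rw [show (Finset.univ : Finset (Fin 10)) = {0,1,2,3,4,5,6,7,8,9} from by decide]
  repeat rw [Finset.prod_insert (by decide)]
  rw [Finset.prod_singleton]
  ring

set_option maxHeartbeats 4000000 in
lemma key : 2 * σ 5 = σ 2 * σ 3 + C (1944 : ℂ) * ∏ j, Q j := by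
  rw [sig5, sig2, sig3, prodQ, hs45, hp45, hq01, hq23, hq45,
    show A 0 = 2 * X 0 ^ 4 + 2 * X 1 ^ 4 - X 2 ^ 4 - X 3 ^ 4
      + 12 * X 0 * X 1 * (X 2 ^ 2 + X 3 ^ 2) + 6 * X 2 ^ 2 * X 3 ^ 2 from rfl,
    show A 1 = -X 0 ^ 4 - X 1 ^ 4 + 2 * X 2 ^ 4 + 2 * X 3 ^ 4
      + 6 * X 0 ^ 2 * X 1 ^ 2 - 12 * (X 0 ^ 2 + X 1 ^ 2) * X 2 * X 3 from rfl,
    show A 2 = 2 * X 0 ^ 4 + 2 * X 1 ^ 4 - X 2 ^ 4 - X 3 ^ 4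
      - 12 * X 0 * X 1 * (X 2 ^ 2 + X 3 ^ 2) + 6 * X 2 ^ 2 * X 3 ^ 2 from rfl,
    show A 3 = -X 0 ^ 4 - X 1 ^ 4 + 2 * X 2 ^ 4 + 2 * X 3 ^ 4
      + 6 * X 0 ^ 2 * X 1 ^ 2 + 12 * (X 0 ^ 2 + X 1 ^ 2) * X 2 * X 3 from rfl,
    show Q 6 = X 0 ^ 2 + X 1 ^ 2 + 2 * X 2 * X 3 from rfl,
    show Q 7 = 2 * X 0 * X 1 + X 2 ^ 2 + X 3 ^ 2 from rfl,
    show Q 8 = X 0 ^ 2 + X 1 ^ 2 - 2 * X 2 * X 3 from rfl,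
    show Q 9 = 2 * X 0 * X 1 - X 2 ^ 2 - X 3 ^ 2 from rfl,
    show (C (1944 : ℂ) : MvPolynomial (Fin 4) ℂ) = 1944 from map_ofNat _ _]
  ring

/-- With F₈ = −σ₂/6, F₁₂ = −σ₃/4, F₂₀ = σ₅/12 and Π₂₀ = Q₁⋯Q₁₀, one has
    F₂₀ = F₈·F₁₂ + 81·Π₂₀; equivalently 2σ₅ = σ₂σ₃ + 1944·Q₁⋯Q₁₀. -/
theorem stmt7 :
    C (1/12 : ℂ) * σ 5 =
      (C (-(1/6) : ℂ) * σ 2) * (C (-(1/4) : ℂ) * σ 3) + C (81 : ℂ) * ∏ j, Q j ∧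
    2 * σ 5 = σ 2 * σ 3 + C (1944 : ℂ) * ∏ j, Q j := by
  refine ⟨?_, key⟩
  have c2 : (2 : MvPolynomial (Fin 4) ℂ) = C 2 := (map_ofNat C 2).symm
  have h1 : (C (1/24 : ℂ) : MvPolynomial (Fin 4) ℂ) = C (-(1/6) : ℂ) * C (-(1/4) : ℂ) := by
    rw [← C_mul]; norm_num
  have h2 : (C (1/24 : ℂ) : MvPolynomial (Fin 4) ℂ) * C (1944 : ℂ) = C (81 : ℂ) := by
    rw [← C_mul]; norm_num
  calc C (1/12 : ℂ) * σ 5 = C (1/24 : ℂ) * (2 * σ 5) := by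
        rw [c2, ← mul_assoc, ← C_mul]; norm_num
    _ = C (1/24 : ℂ) * (σ 2 * σ 3 + C (1944 : ℂ) * ∏ j, Q j) := by rw [key]
    _ = (C (-(1/6) : ℂ) * σ 2) * (C (-(1/4) : ℂ) * σ 3) + C (81 : ℂ) * ∏ j, Q j := by
        linear_combination (σ 2 * σ 3) * h1 + (∏ j, Q j) * h2
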